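/- For every μ ≠ 0 and every ε ∈ (0,1), there exists a constant c₀ > 0 such that the function G(α) = Φ(Φ⁻¹(α/2) − μ) + Φ(Φ⁻¹(α/2) + μ) satisfies G''(α) ≤ −c₀ for all α ∈ (0, 1−ε); that is, G is strongly concave on (0, 1−ε). -/

import Mathlib

/-- The standard normal cumulative distribution function. -/
noncomputable def Phi (x : ℝ) : ℝ :=
  ∫ t in Set.Iic x, (Real.sqrt (2 * Real.pi))⁻¹ * Real.exp (-t ^ 2 / 2)

/-- The inverse of the standard normal CDF, mapping (0,1) onto ℝ. -/
noncomputable def PhiInv : ℝ → ℝ := Function.invFun Phi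

/-!
Write `x = Φ⁻¹(α / 2)` and `φ` for the standard normal density. The inverse function rule and the
Gaussian likelihood ratio `φ(x ∓ μ) / φ(x) = e^{-μ²/2} e^{±μx}` give `G'(α) = e^{-μ²/2} cosh(μx)`,
hence `G''(α) = e^{-μ²/2} μ sinh(μx) / (2φ(x))`. For `α < 1 - ε` we have
`x < x₀ = Φ⁻¹((1 - ε) / 2) < 0`; since `x ↦ μ sinh(μx)` is increasing and `1 / φ ≥ √(2π)`,
`G''(α) ≤ e^{-μ²/2} μ sinh(μx₀) √(2π) / 2 < 0`.
-/

open Real Set Filter MeasureTheory ProbabilityTheory Topology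

local notation "φ" => gaussianPDFReal 0 1

lemma gaussianPDFReal_zero_one (t : ℝ) : φ t = (√(2 * π))⁻¹ * exp (-t ^ 2 / 2) := by
  simp [gaussianPDFReal]

lemma gaussianPDFReal_zero_one_le (t : ℝ) : φ t ≤ (√(2 * π))⁻¹ := by
  rw [gaussianPDFReal_zero_one]
  exact mul_le_of_le_one_right (by positivity) (exp_le_one_iff.2 (by nlinarith [sq_nonneg t]))

lemma continuous_gaussianPDFReal_zero_one : Continuous φ := by
  simp only [gaussianPDFReal_def]; fun_prop

lemma gaussianPDFReal_zero_one_neg (t : ℝ) : φ (-t) = φ t := by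
  simp [gaussianPDFReal_zero_one]

lemma gaussianPDFReal_zero_one_sub_div (x μ : ℝ) :
    φ (x - μ) / φ x = exp (-μ ^ 2 / 2) * exp (μ * x) := by
  rw [gaussianPDFReal_zero_one, gaussianPDFReal_zero_one, mul_div_mul_left _ _ (by positivity),
    ← exp_sub, ← exp_add]
  ring_nf

lemma Phi_eq_integral (x : ℝ) : Phi x = ∫ t in Iic x, φ t := by
  simp [Phi, gaussianPDFReal_zero_one]

lemma Phi_eq_cdf : Phi = cdf (gaussianReal 0 1) := by
  ext x
  rw [Phi_eq_integral, cdf_eq_real, measureReal_def, gaussianReal_apply_eq_integral _ one_ne_zero,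
    ENNReal.toReal_ofReal
      (setIntegral_nonneg measurableSet_Iic fun t _ ↦ gaussianPDFReal_nonneg _ _ _)]

lemma Phi_sub_Phi (x y : ℝ) : Phi y - Phi x = ∫ t in x..y, φ t := by
  rw [Phi_eq_integral, Phi_eq_integral]
  exact intervalIntegral.integral_Iic_sub_Iic (integrable_gaussianPDFReal 0 1).integrableOn
    (integrable_gaussianPDFReal 0 1).integrableOn

lemma hasDerivAt_Phi (x : ℝ) : HasDerivAt Phi (φ x) x := by
  have hPhi : Phi = fun y ↦ Phi 0 + ∫ t in 0..y, φ t := by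
    ext y; rw [← Phi_sub_Phi]; ring
  rw [hPhi]
  exact (intervalIntegral.integral_hasDerivAt_right
    (integrable_gaussianPDFReal 0 1).intervalIntegrable
    (continuous_gaussianPDFReal_zero_one.stronglyMeasurableAtFilter _ _)
    continuous_gaussianPDFReal_zero_one.continuousAt).const_add _

lemma Phi_strictMono : StrictMono Phi :=
  strictMono_of_hasDerivAt_pos hasDerivAt_Phi fun _ ↦ gaussianPDFReal_pos _ _ _ one_ne_zero

lemma continuous_Phi : Continuous Phi :=
  continuous_iff_continuousAt.2 fun x ↦ (hasDerivAt_Phi x).continuousAt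

lemma Phi_neg (x : ℝ) : Phi (-x) = 1 - Phi x := by
  have h := intervalIntegral.integral_Iic_add_Ioi (f := φ) (b := x) (μ := volume)
    (integrable_gaussianPDFReal 0 1).integrableOn (integrable_gaussianPDFReal 0 1).integrableOn
  rw [integral_gaussianPDFReal_eq_one 0 one_ne_zero, ← Phi_eq_integral] at h
  rw [Phi_eq_integral, ← neg_neg x, ← integral_comp_neg_Ioi]
  simp only [gaussianPDFReal_zero_one_neg, neg_neg]
  linarith

lemma Phi_zero : Phi 0 = 1 / 2 := by
  linarith [neg_zero (G := ℝ) ▸ Phi_neg 0]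

lemma tendsto_Phi_atBot : Tendsto Phi atBot (𝓝 0) := Phi_eq_cdf ▸ tendsto_cdf_atBot _

lemma tendsto_Phi_atTop : Tendsto Phi atTop (𝓝 1) := Phi_eq_cdf ▸ tendsto_cdf_atTop _

lemma Phi_mem_Ioo (x : ℝ) : Phi x ∈ Ioo 0 1 := by
  have h0 := Phi_strictMono.monotone.le_of_tendsto tendsto_Phi_atBot (x - 1)
  have h1 := Phi_strictMono.monotone.ge_of_tendsto tendsto_Phi_atTop (x + 1)
  exact ⟨h0.trans_lt (Phi_strictMono (by linarith)), (Phi_strictMono (by linarith)).trans_le h1⟩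

lemma range_Phi : range Phi = Ioo 0 1 :=
  (range_subset_iff.2 Phi_mem_Ioo).antisymm fun _ hy ↦
    mem_range_of_exists_le_of_exists_ge continuous_Phi
      ((tendsto_Phi_atBot.eventually_lt_const hy.1).exists.imp fun _ ↦ le_of_lt)
      ((tendsto_Phi_atTop.eventually_const_lt hy.2).exists.imp fun _ ↦ le_of_lt)

lemma Phi_PhiInv {y : ℝ} (hy : y ∈ Ioo 0 1) : Phi (PhiInv y) = y :=
  Function.invFun_eq (range_Phi ▸ hy : y ∈ range Phi)

lemma PhiInv_Phi (x : ℝ) : PhiInv (Phi x) = x :=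
  Function.leftInverse_invFun Phi_strictMono.injective x

lemma PhiInv_strictMonoOn : StrictMonoOn PhiInv (Ioo 0 1) := fun y hy z hz hyz ↦
  Phi_strictMono.lt_iff_lt.1 (by rwa [Phi_PhiInv hy, Phi_PhiInv hz])

lemma hasDerivAt_PhiInv {y : ℝ} (hy : y ∈ Ioo 0 1) : HasDerivAt PhiInv (φ (PhiInv y))⁻¹ y := by
  have hnhds : Ioo 0 1 ∈ 𝓝 y := isOpen_Ioo.mem_nhds hy
  have himage : PhiInv '' Ioo 0 1 = univ :=
    eq_univ_of_forall fun x ↦ ⟨Phi x, Phi_mem_Ioo x, PhiInv_Phi x⟩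
  refine (hasDerivAt_Phi _).of_local_left_inverse ?_ (gaussianPDFReal_pos _ _ _ one_ne_zero).ne'
    (eventually_of_mem hnhds fun _ ↦ Phi_PhiInv)
  exact PhiInv_strictMonoOn.continuousAt_of_image_mem_nhds hnhds (himage ▸ univ_mem)

lemma monotone_mul_sinh_mul (μ : ℝ) : Monotone fun x ↦ μ * sinh (μ * x) := by
  intro x y hxy
  rcases le_total 0 μ with hμ | hμ
  · exact mul_le_mul_of_nonneg_left (sinh_le_sinh.2 (mul_le_mul_of_nonneg_left hxy hμ)) hμ
  · exact mul_le_mul_of_nonpos_left (sinh_le_sinh.2 (mul_le_mul_of_nonpos_left hxy hμ)) hμ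

lemma mul_sinh_mul_neg {μ x : ℝ} (hμ : μ ≠ 0) (hx : x < 0) : μ * sinh (μ * x) < 0 := by
  rcases hμ.lt_or_gt with hμ | hμ
  · exact mul_neg_of_neg_of_pos hμ (sinh_pos_iff.2 (mul_pos_of_neg_of_neg hμ hx))
  · exact mul_neg_of_pos_of_neg hμ (sinh_neg_iff.2 (mul_neg_of_pos_of_neg hμ hx))

/-- The power `G(α)` at mean `μ` of the two-sided level-`α` Gaussian test of `θ = 0`. -/
noncomputable def twoSidedPower (μ α : ℝ) : ℝ :=
  Phi (PhiInv (α / 2) - μ) + Phi (PhiInv (α / 2) + μ)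

section twoSidedPower

variable (μ : ℝ) {α : ℝ} (hα : α ∈ Ioo 0 2)
include hα

lemma hasDerivAt_PhiInv_half :
    HasDerivAt (fun a ↦ PhiInv (a / 2)) ((φ (PhiInv (α / 2)))⁻¹ * (1 / 2)) α := by
  have hhalf : HasDerivAt (fun a : ℝ ↦ a / 2) (1 / 2) α := by
    simpa only [div_eq_mul_inv, one_mul] using hasDerivAt_mul_const (2⁻¹ : ℝ)
  exact (hasDerivAt_PhiInv ⟨half_pos hα.1, by linarith [hα.2]⟩).comp α hhalf

lemma hasDerivAt_twoSidedPower :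
    HasDerivAt (twoSidedPower μ) (exp (-μ ^ 2 / 2) * cosh (μ * PhiInv (α / 2))) α := by
  have hderiv := ((hasDerivAt_Phi _).comp α ((hasDerivAt_PhiInv_half hα).sub_const μ)).add
    ((hasDerivAt_Phi _).comp α ((hasDerivAt_PhiInv_half hα).add_const μ))
  refine hderiv.congr_deriv ?_
  set x := PhiInv (α / 2)
  have hminus := gaussianPDFReal_zero_one_sub_div x μ
  have hplus := gaussianPDFReal_zero_one_sub_div x (-μ)
  rw [sub_neg_eq_add, neg_sq, neg_mul] at hplus
  rw [div_eq_mul_inv] at hminus hplus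
  rw [cosh_eq]
  linear_combination (1 / 2 : ℝ) * hminus + (1 / 2 : ℝ) * hplus

lemma deriv_deriv_twoSidedPower : deriv (deriv (twoSidedPower μ)) α =
    exp (-μ ^ 2 / 2) * (μ * sinh (μ * PhiInv (α / 2))) * (φ (PhiInv (α / 2)))⁻¹ / 2 := by
  have hderiv : deriv (twoSidedPower μ) =ᶠ[𝓝 α]
      fun a ↦ exp (-μ ^ 2 / 2) * cosh (μ * PhiInv (a / 2)) :=
    eventually_of_mem (isOpen_Ioo.mem_nhds hα) fun a ha ↦ (hasDerivAt_twoSidedPower μ ha).deriv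
  rw [hderiv.deriv_eq]
  have hcosh := (hasDerivAt_cosh _).comp α ((hasDerivAt_PhiInv_half hα).const_mul μ)
  refine (hcosh.const_mul (exp (-μ ^ 2 / 2))).deriv.trans ?_
  ring

end twoSidedPower

/-- For every `μ ≠ 0` and `ε ∈ (0,1)`, there is `c₀ > 0` such that the power function
`G(α) = Φ(Φ⁻¹(α/2) − μ) + Φ(Φ⁻¹(α/2) + μ)` satisfies `G''(α) ≤ −c₀` for all
`α ∈ (0, 1−ε)`, i.e. `G` is strongly concave on `(0, 1−ε)`. -/
theorem stmt_5 (μ : ℝ) (hμ : μ ≠ 0) (ε : ℝ) (hε : ε ∈ Set.Ioo (0 : ℝ) 1) :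
    ∃ c₀ > (0 : ℝ), ∀ α ∈ Set.Ioo (0 : ℝ) (1 - ε),
      deriv (deriv (fun a => Phi (PhiInv (a / 2) - μ) + Phi (PhiInv (a / 2) + μ))) α ≤ -c₀ := by
  obtain ⟨hε₀, hε₁⟩ := hε
  have hmem : (1 - ε) / 2 ∈ Ioo 0 1 := ⟨by linarith, by linarith⟩
  set x₀ := PhiInv ((1 - ε) / 2)
  have hx₀ : x₀ < 0 := by
    simpa only [← Phi_zero, PhiInv_Phi] using
      PhiInv_strictMonoOn hmem (Phi_mem_Ioo 0) (by rw [Phi_zero]; linarith)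
  set s₀ := μ * sinh (μ * x₀)
  have hs₀ : s₀ < 0 := mul_sinh_mul_neg hμ hx₀
  refine ⟨exp (-μ ^ 2 / 2) * -s₀ * √(2 * π) / 2, by have := neg_pos.2 hs₀; positivity,
    fun α hα ↦ ?_⟩
  have hα₁ : α / 2 ∈ Ioo 0 1 := ⟨by linarith [hα.1], by linarith [hα.2]⟩
  change deriv (deriv (twoSidedPower μ)) α ≤ _
  rw [deriv_deriv_twoSidedPower μ ⟨hα.1, by linarith [hα.2]⟩]
  set x := PhiInv (α / 2)
  have hs : μ * sinh (μ * x) ≤ s₀ :=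
    monotone_mul_sinh_mul μ (PhiInv_strictMonoOn hα₁ hmem (by linarith [hα.2])).le
  have hφ : √(2 * π) ≤ (φ x)⁻¹ := by
    simpa using inv_anti₀ (gaussianPDFReal_pos _ _ x one_ne_zero) (gaussianPDFReal_zero_one_le x)
  have hφ₀ : 0 ≤ (φ x)⁻¹ := (inv_pos.2 (gaussianPDFReal_pos _ _ x one_ne_zero)).le
  have hE := exp_pos (-μ ^ 2 / 2)
  calc exp (-μ ^ 2 / 2) * (μ * sinh (μ * x)) * (φ x)⁻¹ / 2
      ≤ exp (-μ ^ 2 / 2) * s₀ * (φ x)⁻¹ / 2 := by gcongr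
    _ ≤ exp (-μ ^ 2 / 2) * s₀ * √(2 * π) / 2 := by
      gcongr ?_ / 2
      exact mul_le_mul_of_nonpos_left hφ (mul_nonpos_of_nonneg_of_nonpos hE.le hs₀.le)
    _ = -(exp (-μ ^ 2 / 2) * -s₀ * √(2 * π) / 2) := by ring
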